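/- Let G be an additive abelian group containing an element x of order 20, and let S = {−2x, x, 3x, 4x, 5x, 6x}. Then S is a zero-sum free subset of G with |S| = 6 and |Σ(S)| = 19. -/
import Mathlib


open Finset

def sigmaSet {G : Type*} [AddCommGroup G] [DecidableEq G] (S : Finset G) : Finset G :=
  (S.powerset.filter (· ≠ ∅)).image (fun T => T.sum id)

def ZeroSumFree {G : Type*} [AddCommGroup G] (S : Finset G) : Prop :=
  ∀ T ⊆ S, T ≠ ∅ → T.sum id ≠ 0

lemma mem_sigmaSet {G : Type*} [AddCommGroup G] [DecidableEq G] {S : Finset G} {y : G} :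
    y ∈ sigmaSet S ↔ ∃ T, T ⊆ S ∧ T ≠ ∅ ∧ T.sum id = y := by
  simp only [sigmaSet, mem_image, mem_filter, mem_powerset]
  tauto

lemma sigmaSet_singleton {G : Type*} [AddCommGroup G] [DecidableEq G] (a : G) :
    sigmaSet ({a} : Finset G) = {a} := by
  ext y
  simp only [mem_sigmaSet, Finset.subset_singleton_iff, mem_singleton]
  constructor
  · rintro ⟨T, hT | hT, hne, hsum⟩
    · exact absurd hT hne
    · subst hT; simpa using hsum.symm
  · rintro rfl
    exact ⟨({y} : Finset G), Or.inr rfl, by simp, by simp⟩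

lemma sigmaSet_insert {G : Type*} [AddCommGroup G] [DecidableEq G] {a : G} {S : Finset G}
    (ha : a ∉ S) :
    sigmaSet (insert a S) = insert a (sigmaSet S ∪ (sigmaSet S).image (a + ·)) := by
  ext y
  simp only [mem_sigmaSet, mem_insert, mem_union, mem_image]
  constructor
  · rintro ⟨T, hT, hne, rfl⟩
    by_cases haT : a ∈ T
    · have hT' : T.erase a ⊆ S := fun b hb => by
        rcases mem_insert.1 (hT (erase_subset a T hb)) with rfl | h
        · exact absurd (mem_erase.1 hb).1 (by simp)
        · exact h
      have hsum : T.sum id = a + (T.erase a).sum id := by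
        have h := Finset.add_sum_erase T id haT
        simpa using h.symm
      by_cases hTe : T.erase a = ∅
      · left
        rw [hsum, hTe]
        simp
      · right; right
        exact ⟨(T.erase a).sum id, ⟨T.erase a, hT', hTe, rfl⟩, hsum.symm⟩
    · have : T ⊆ S := fun b hb => by
        rcases mem_insert.1 (hT hb) with rfl | h
        · exact absurd hb haT
        · exact h
      exact Or.inr (Or.inl ⟨T, this, hne, rfl⟩)
  · rintro (rfl | ⟨T, hT, hne, rfl⟩ | ⟨z, ⟨T, hT, hne, rfl⟩, rfl⟩)
    · exact ⟨({y} : Finset G), by simp, by simp, by simp⟩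
    · exact ⟨T, hT.trans (subset_insert a S), hne, rfl⟩
    · refine ⟨insert a T, insert_subset_insert a hT, by simp, ?_⟩
      rw [Finset.sum_insert (fun h => ha (hT h))]
      rfl

set_option maxRecDepth 8000 in
lemma zmod20_facts : (0 : ZMod 20) ∉ sigmaSet ({-2,1,3,4,5,6} : Finset (ZMod 20)) ∧
    (sigmaSet ({-2,1,3,4,5,6} : Finset (ZMod 20))).card = 19 := by
  rw [sigmaSet_insert (by decide), sigmaSet_insert (by decide), sigmaSet_insert (by decide),
    sigmaSet_insert (by decide), sigmaSet_insert (by decide), sigmaSet_singleton]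
  decide

lemma sigmaSet_map {A B : Type*} [AddCommGroup A] [AddCommGroup B] [DecidableEq A]
    [DecidableEq B] (f : A ↪ B) (hf : ∀ s : Finset A, (s.map f).sum id = f (s.sum id))
    (S : Finset A) : sigmaSet (S.map f) = (sigmaSet S).map f := by
  ext y
  simp only [mem_sigmaSet, mem_map]
  constructor
  · rintro ⟨T, hTS, hTne, hsum⟩
    obtain ⟨u, hu, rfl⟩ := Finset.subset_map_iff.1 hTS
    exact ⟨u.sum id, ⟨u, hu, by simpa using hTne, rfl⟩, by rw [← hf]; exact hsum⟩
  · rintro ⟨a, ⟨T, hTS, hTne, rfl⟩, rfl⟩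
    exact ⟨T.map f, Finset.map_subset_map.2 hTS, by simpa using hTne, hf T⟩

set_option maxRecDepth 10000 in
theorem stmt13 {G : Type*} [AddCommGroup G] [DecidableEq G] (x : G)
    (hx : addOrderOf x = 20) :
    ZeroSumFree ({-(2 • x), x, 3 • x, 4 • x, 5 • x, 6 • x} : Finset G) ∧
      ({-(2 • x), x, 3 • x, 4 • x, 5 • x, 6 • x} : Finset G).card = 6 ∧
      (sigmaSet ({-(2 • x), x, 3 • x, 4 • x, 5 • x, 6 • x} : Finset G)).card = 19 := by
  have h20 : ((zmultiplesHom G x) : ℤ →+ G) (20 : ℕ) = 0 := by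
    simp [zmultiplesHom_apply]
    have : (20 : ℕ) • x = 0 := by
      rw [← hx]; exact addOrderOf_nsmul_eq_zero x
    exact_mod_cast this
  set φ : ZMod 20 →+ G := ZMod.lift 20 ⟨zmultiplesHom G x, h20⟩ with hφdef
  have hφint : ∀ n : ℤ, φ ((n : ZMod 20)) = n • x := fun n => by
    rw [hφdef, ZMod.lift_coe]; simp [zmultiplesHom_apply]
  have hinj : Function.Injective φ := by
    rw [injective_iff_map_eq_zero]
    intro a ha
    have hval : a = ((a.val : ℤ) : ZMod 20) := by
      simp [ZMod.natCast_val, ZMod.intCast_cast, ZMod.intCast_zmod_cast]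
    rw [hval, hφint] at ha
    have hdvd : (20 : ℕ) ∣ a.val := by
      have := addOrderOf_dvd_of_nsmul_eq_zero (show a.val • x = 0 by exact_mod_cast ha)
      rwa [hx] at this
    have hlt : a.val < 20 := a.val_lt
    have h0 : a.val = 0 := by omega
    exact (ZMod.val_eq_zero a).1 h0
  set f : ZMod 20 ↪ G := ⟨φ, hinj⟩ with hfdef
  have hsum : ∀ s : Finset (ZMod 20), (s.map f).sum id = f (s.sum id) := by
    intro s
    rw [Finset.sum_map]
    exact (map_sum φ id s).symm
  have hφnat : ∀ n : ℕ, φ ((n : ZMod 20)) = n • x := fun n => by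
    have h := hφint (n : ℤ)
    push_cast at h
    rwa [natCast_zsmul] at h
  have hf2 : f (-2) = -(2 • x) := by
    show φ (-2) = -(2 • x)
    rw [show (-2 : ZMod 20) = -(((2 : ℕ) : ZMod 20)) by norm_cast, map_neg, hφnat]
  have hf1 : f 1 = x := by
    show φ 1 = x
    rw [show (1 : ZMod 20) = (((1 : ℕ) : ZMod 20)) by norm_cast, hφnat, one_nsmul]
  have hf3 : f 3 = 3 • x := by
    show φ 3 = 3 • x
    rw [show (3 : ZMod 20) = (((3 : ℕ) : ZMod 20)) by norm_cast, hφnat]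
  have hf4 : f 4 = 4 • x := by
    show φ 4 = 4 • x
    rw [show (4 : ZMod 20) = (((4 : ℕ) : ZMod 20)) by norm_cast, hφnat]
  have hf5 : f 5 = 5 • x := by
    show φ 5 = 5 • x
    rw [show (5 : ZMod 20) = (((5 : ℕ) : ZMod 20)) by norm_cast, hφnat]
  have hf6 : f 6 = 6 • x := by
    show φ 6 = 6 • x
    rw [show (6 : ZMod 20) = (((6 : ℕ) : ZMod 20)) by norm_cast, hφnat]
  have hS : ({-(2 • x), x, 3 • x, 4 • x, 5 • x, 6 • x} : Finset G) =
      ({-2, 1, 3, 4, 5, 6} : Finset (ZMod 20)).map f := by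
    rw [Finset.map_insert, Finset.map_insert, Finset.map_insert, Finset.map_insert,
      Finset.map_insert, Finset.map_singleton, hf1, hf2, hf3, hf4, hf5, hf6]
  refine ⟨?_, ?_, ?_⟩
  · intro T hT hne
    rw [hS] at hT
    obtain ⟨u, hu, rfl⟩ := Finset.subset_map_iff.1 hT
    rw [hsum]
    have hune : u ≠ ∅ := by simpa using hne
    have hmem : u.sum id ∈ sigmaSet ({-2, 1, 3, 4, 5, 6} : Finset (ZMod 20)) :=
      mem_sigmaSet.2 ⟨u, hu, hune, rfl⟩
    have hne0 : u.sum id ≠ 0 := fun h => zmod20_facts.1 (h ▸ hmem)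
    intro h
    exact hne0 (hinj (h.trans (map_zero φ).symm))
  · rw [hS, Finset.card_map]
    decide
  · rw [hS, sigmaSet_map f hsum, Finset.card_map]
    exact zmod20_facts.2
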